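/- arXiv:math/0610717 — 3 statements merged into one kernel-verified Lean document; each statement's English description precedes it below -/
import Mathlib

section
/- For every real number α and every real constant c ≥ 1/√5, there exist infinitely many pairs of integers (a, b) with b > 0 satisfying |α − a/b| < c/b². Precisely: for every natural number N there exist integers a and b with b > N such that |α − a/b| < c/b². -/
/-!
For irrational `α`, take Farey neighbours `p/q < α < r/s`, i.e. `qr - ps = 1`, so that the
bracket has length `1/(qs)`. If neither endpoint satisfies `|α - a/b| < 1/(√5 b²)`, adding
the two distances gives `q² + s² ≤ √5 qs`: the ratio `q/s` lies between the roots
`(√5 ∓ 1)/2` of `t² - √5 t + 1`, strictly since `√5` is irrational. The mediant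
`(p + r)/(q + s)` is a Farey neighbour of whichever endpoint lies on the same side of `α`, so
if it fails as well, then `(q + s)/q` or `(q + s)/s` also lies strictly between the roots,
which is incompatible with the bound on `q/s`. Descending the Stern–Brocot tree makes the
bracket shorter than the distance from `α` to every fraction of denominator at most `N`, so
the good fraction found there has denominator greater than `N`. A rational `α` is its own
approximation.
-/

open Real Filter Topology

theorem irrational_sqrt_five : Irrational √5 := by
  simpa using Nat.prime_five.irrational_sqrt

theorem sq_add_sq_ne_sqrt_five_mul {q s : ℤ} (hq : q ≠ 0) (hs : s ≠ 0) :
    (q : ℝ) ^ 2 + s ^ 2 ≠ √5 * (q * s) := by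
  have := (irrational_sqrt_five.mul_intCast (mul_ne_zero hq hs)).ne_int (q ^ 2 + s ^ 2)
  push_cast at this
  exact this.symm

/-- Completing the square, the hypothesis says `|2x - √5 y| < y`, so `2(x + y) - √5 y > y`. -/
theorem sqrt_five_mul_le_sq_add_sq_add {x y : ℝ} (hy : 0 < y)
    (h : x ^ 2 + y ^ 2 < √5 * (x * y)) : √5 * (y * (x + y)) ≤ y ^ 2 + (x + y) ^ 2 := by
  have h5 : √5 ^ 2 = 5 := sq_sqrt (by norm_num)
  have hsq : (2 * x - √5 * y) ^ 2 < y ^ 2 := by nlinarith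
  have hlow : -y < 2 * x - √5 * y := (abs_lt.1 (abs_lt_of_sq_lt_sq hsq hy.le)).1
  nlinarith

theorem sqrt_five_mul_lt_sq_add_sq_add {q s : ℤ} (hq : 0 < q) (hs : 0 < s)
    (h : (q : ℝ) ^ 2 + s ^ 2 ≤ √5 * (q * s)) :
    √5 * (s * (q + s)) < s ^ 2 + (q + s) ^ 2 := by
  have hlt := h.lt_of_ne (sq_add_sq_ne_sqrt_five_mul hq.ne' hs.ne')
  have hle := sqrt_five_mul_le_sq_add_sq_add (by exact_mod_cast hs) hlt
  refine hle.lt_of_ne ?_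
  have := sq_add_sq_ne_sqrt_five_mul hs.ne' (add_pos hq hs).ne'
  push_cast at this
  exact fun heq => this heq.symm

theorem sq_add_sq_le_sqrt_five_mul {u v : ℝ} (hu : 0 < u) (hv : 0 < v)
    (h : 1 / (√5 * u ^ 2) + 1 / (√5 * v ^ 2) ≤ 1 / (u * v)) :
    u ^ 2 + v ^ 2 ≤ √5 * (u * v) := by
  have h5 : 0 < √5 := by positivity
  field_simp at h
  nlinarith

theorem Irrational.exists_pos_le_abs_sub_div {α : ℝ} (hα : Irrational α) (N : ℕ) :
    ∃ δ > 0, ∀ a b : ℤ, 0 < b → b ≤ N → δ ≤ |α - a / b| := by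
  set d : ℤ → ℝ := fun b => |b * α - round (b * α)| / b
  have hd : ∀ᶠ δ in 𝓝[>] 0, ∀ b ∈ Finset.Icc (1 : ℤ) N, δ < d b := by
    refine (Finset.eventually_all _).2 fun b hb => nhdsWithin_le_nhds (eventually_lt_nhds ?_)
    have hb : 0 < b := (Finset.mem_Icc.1 hb).1
    have hne := (hα.intCast_mul hb.ne').ne_int (round (b * α))
    exact div_pos (abs_pos.2 (sub_ne_zero.2 hne)) (Int.cast_pos.2 hb)
  obtain ⟨δ, hδd, hδ⟩ := (hd.and self_mem_nhdsWithin).exists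
  refine ⟨δ, hδ, fun a b hb hbN => (hδd b (Finset.mem_Icc.2 ⟨hb, hbN⟩)).le.trans ?_⟩
  have hbR : (0 : ℝ) < b := by exact_mod_cast hb
  calc d b ≤ |b * α - a| / b := div_le_div_of_nonneg_right (round_le _ a) hbR.le
    _ = |α - a / b| := by
      rw [← abs_of_pos hbR, ← abs_div, abs_of_pos hbR]
      congr 1
      field_simp

structure IsFareyBracket (α : ℝ) (p q r s : ℤ) : Prop where
  q_pos : 0 < q
  s_pos : 0 < s
  det_eq_one : q * r - p * s = 1
  left_lt : (p : ℝ) / q < α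
  lt_right : α < (r : ℝ) / s

namespace IsFareyBracket

variable {α : ℝ} {p q r s : ℤ}

theorem sub_eq (h : IsFareyBracket α p q r s) : (r : ℝ) / s - p / q = 1 / (q * s) := by
  have hq : (q : ℝ) ≠ 0 := by exact_mod_cast h.q_pos.ne'
  have hs : (s : ℝ) ≠ 0 := by exact_mod_cast h.s_pos.ne'
  have hdet : (q : ℝ) * r - p * s = 1 := by exact_mod_cast h.det_eq_one
  field_simp
  linarith

theorem mediant_mem_Icc (h : IsFareyBracket α p q r s) :
    ((p : ℝ) + r) / (q + s) ∈ Set.Icc ((p : ℝ) / q) (r / s) := by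
  have hq : (0 : ℝ) < q := by exact_mod_cast h.q_pos
  have hs : (0 : ℝ) < s := by exact_mod_cast h.s_pos
  have hdet : (q : ℝ) * r - p * s = 1 := by exact_mod_cast h.det_eq_one
  constructor <;> rw [div_le_div_iff₀ (by positivity) (by positivity)] <;> nlinarith

theorem mediant_left (h : IsFareyBracket α p q r s) (hm : α < ((p : ℝ) + r) / (q + s)) :
    IsFareyBracket α p q (p + r) (q + s) where
  q_pos := h.q_pos
  s_pos := add_pos h.q_pos h.s_pos
  det_eq_one := by linear_combination h.det_eq_one
  left_lt := h.left_lt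
  lt_right := by push_cast; exact hm

theorem mediant_right (h : IsFareyBracket α p q r s) (hm : ((p : ℝ) + r) / (q + s) < α) :
    IsFareyBracket α (p + r) (q + s) r s where
  q_pos := add_pos h.q_pos h.s_pos
  s_pos := h.s_pos
  det_eq_one := by linear_combination h.det_eq_one
  left_lt := by push_cast; exact hm
  lt_right := h.lt_right

theorem sq_add_sq_le (h : IsFareyBracket α p q r s) (hp : 1 / (√5 * q ^ 2) ≤ |α - p / q|)
    (hr : 1 / (√5 * s ^ 2) ≤ |α - r / s|) :
    (q : ℝ) ^ 2 + s ^ 2 ≤ √5 * (q * s) := by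
  rw [abs_of_pos (sub_pos.2 h.left_lt)] at hp
  rw [abs_of_neg (sub_neg.2 h.lt_right)] at hr
  refine sq_add_sq_le_sqrt_five_mul (by exact_mod_cast h.q_pos) (by exact_mod_cast h.s_pos) ?_
  rw [← h.sub_eq]
  linarith

theorem exists_mem_Icc_abs_sub_lt (h : IsFareyBracket α p q r s) (hα : Irrational α) :
    ∃ a b : ℤ, 0 < b ∧ (a : ℝ) / b ∈ Set.Icc ((p : ℝ) / q) (r / s) ∧
      |α - a / b| < 1 / (√5 * b ^ 2) := by
  by_contra! hbad
  have hpr : (p : ℝ) / q ≤ r / s := (h.left_lt.trans h.lt_right).le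
  have hp := hbad p q h.q_pos ⟨le_rfl, hpr⟩
  have hr := hbad r s h.s_pos ⟨hpr, le_rfl⟩
  have hm := hbad (p + r) (q + s) (add_pos h.q_pos h.s_pos)
    (by push_cast; exact h.mediant_mem_Icc)
  push_cast at hm
  have hqs := h.sq_add_sq_le hp hr
  rcases (hα.ne_rat ((p + r) / (q + s))).lt_or_gt with hlt | hgt
  · push_cast at hlt
    have hleft := (h.mediant_left hlt).sq_add_sq_le hp (by push_cast; exact hm)
    have := sqrt_five_mul_lt_sq_add_sq_add h.s_pos h.q_pos (by linarith)
    push_cast at hleft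
    linarith
  · push_cast at hgt
    have hright := (h.mediant_right hgt).sq_add_sq_le (by push_cast; exact hm) hr
    have := sqrt_five_mul_lt_sq_add_sq_add h.q_pos h.s_pos hqs
    push_cast at hright
    linarith

end IsFareyBracket

theorem Irrational.exists_isFareyBracket {α : ℝ} (hα : Irrational α) (n : ℕ) :
    ∃ p q r s : ℤ, IsFareyBracket α p q r s ∧ n ≤ q * s := by
  induction n with
  | zero =>
    refine ⟨⌊α⌋, 1, ⌊α⌋ + 1, 1, ⟨one_pos, one_pos, by ring, ?_, ?_⟩, zero_le_one⟩
    · simpa using (Int.floor_le α).lt_of_ne (hα.ne_int _).symm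
    · simp [Int.lt_floor_add_one]
  | succ n ih =>
    obtain ⟨p, q, r, s, h, hn⟩ := ih
    have hq := h.q_pos
    have hs := h.s_pos
    rcases (hα.ne_rat ((p + r) / (q + s))).lt_or_gt with hlt | hgt
    · push_cast at hlt
      exact ⟨_, _, _, _, h.mediant_left hlt, by push_cast; nlinarith⟩
    · push_cast at hgt
      exact ⟨_, _, _, _, h.mediant_right hgt, by push_cast; nlinarith⟩

theorem Irrational.exists_lt_den_abs_sub_lt {α : ℝ} (hα : Irrational α) (N : ℕ) :
    ∃ a b : ℤ, (N : ℤ) < b ∧ |α - a / b| < 1 / (√5 * b ^ 2) := by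
  obtain ⟨δ, hδ, hfar⟩ := hα.exists_pos_le_abs_sub_div N
  obtain ⟨n, hn⟩ := exists_nat_gt (1 / δ)
  have hn0 : (0 : ℝ) < n := (one_div_pos.2 hδ).trans hn
  obtain ⟨p, q, r, s, h, hqs⟩ := hα.exists_isFareyBracket n
  obtain ⟨a, b, hb, hmem, hab⟩ := h.exists_mem_Icc_abs_sub_lt hα
  refine ⟨a, b, not_le.1 fun hbN => (hfar a b hb hbN).not_gt ?_, hab⟩
  calc |α - a / b| = dist α (a / b) := rfl
    _ ≤ r / s - p / q := Real.dist_le_of_mem_Icc ⟨h.left_lt.le, h.lt_right.le⟩ hmem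
    _ = 1 / (q * s) := h.sub_eq
    _ ≤ 1 / n := one_div_le_one_div_of_le hn0 (by exact_mod_cast hqs)
    _ < δ := (one_div_lt hδ hn0).1 hn

theorem Rat.exists_lt_den_cast_eq_div {K : Type*} [Field K] [CharZero K] (x : ℚ) (N : ℕ) :
    ∃ a b : ℤ, (N : ℤ) < b ∧ (x : K) = a / b := by
  refine ⟨x.num * (N + 1), x.den * (N + 1), by nlinarith [x.pos], ?_⟩
  push_cast
  rw [mul_div_mul_right _ _ N.cast_add_one_ne_zero, Rat.cast_def]

/-- Hurwitz's theorem, part I: for any real `α` and any `c ≥ 1/√5`, there are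
infinitely many integer pairs `(a, b)` with `b > 0` and `|α - a/b| < c/b²`. -/
theorem hurwitz_part_I (α c : ℝ) (hc : c ≥ 1 / Real.sqrt 5) :
    ∀ N : ℕ, ∃ a b : ℤ, (N : ℤ) < b ∧ |α - (a : ℝ) / (b : ℝ)| < c / (b : ℝ) ^ 2 := by
  intro N
  by_cases hα : Irrational α
  · obtain ⟨a, b, hNb, hab⟩ := hα.exists_lt_den_abs_sub_lt N
    refine ⟨a, b, hNb, hab.trans_le ?_⟩
    rw [← div_div]
    exact div_le_div_of_nonneg_right hc (sq_nonneg _)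
  · obtain ⟨x, rfl⟩ := not_not.1 hα
    obtain ⟨a, b, hNb, hx⟩ := x.exists_lt_den_cast_eq_div (K := ℝ) N
    refine ⟨a, b, hNb, ?_⟩
    rw [← hx, sub_self, abs_zero]
    have hb : (0 : ℝ) < b := by exact_mod_cast (Int.natCast_nonneg N).trans_lt hNb
    exact div_pos ((by positivity : (0 : ℝ) < 1 / √5).trans_le hc) (by positivity)
end

section
/- Let α = (√5 + 1)/2 be the Golden Ratio. Then for every real constant c with 0 < c < 1/√5, the inequality |α − a/b| < c/b² has only finitely many integer solutions (a, b) with b > 0. Precisely: the set of pairs of integers (a, b) with b > 0 and |α − a/b| < c/b² is finite. -/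
/-! For `b ≠ 0` the norm `(a - bφ)(a - bψ) = a² - ab - b²` is a nonzero integer, because
`φ` and `ψ` are irrational. If `|φ - a/b| < c/b²`, then `|a - bφ| < c/b` and
`|a - bψ| < c/b + b√5`, so `1 < c²/b² + c√5`, i.e. `b²(1 - c√5) < c²`. As `c√5 < 1`, this
bounds the denominator `b`, and with it the numerator `a`. -/

open Real goldenRatio

theorem one_le_abs_sub_mul_goldenRatio_mul_abs_sub_mul_goldenConj {a b : ℤ} (hb : b ≠ 0) :
    1 ≤ |a - b * φ| * |a - b * ψ| := by
  have hnorm : (a - b * φ) * (a - b * ψ) = ((a ^ 2 - a * b - b ^ 2 : ℤ) : ℝ) := by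
    push_cast
    linear_combination
      (-(a : ℝ) * b) * goldenRatio_add_goldenConj + (b : ℝ) ^ 2 * goldenRatio_mul_goldenConj
  have hφ : (a : ℝ) - b * φ ≠ 0 :=
    sub_ne_zero.2 ((goldenRatio_irrational.intCast_mul hb).ne_int a).symm
  have hψ : (a : ℝ) - b * ψ ≠ 0 :=
    sub_ne_zero.2 ((goldenConj_irrational.intCast_mul hb).ne_int a).symm
  have hne : a ^ 2 - a * b - b ^ 2 ≠ 0 := by
    exact_mod_cast hnorm ▸ mul_ne_zero hφ hψ
  rw [← abs_mul, hnorm, ← Int.cast_abs]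
  exact_mod_cast Int.one_le_abs hne

theorem sq_mul_one_sub_mul_sqrt_five_lt_sq_of_abs_goldenRatio_sub_div_lt {a b : ℤ} {c : ℝ}
    (hb : 0 < b) (h : |φ - a / b| < c / b ^ 2) : (b : ℝ) ^ 2 * (1 - c * √5) < c ^ 2 := by
  have hbR : (0 : ℝ) < b := by exact_mod_cast hb
  set u := |(a : ℝ) - b * φ|
  set v := |(a : ℝ) - b * ψ|
  have hu : b * u < c := by
    rw [show φ - a / b = -(a - b * φ) / b by field_simp; ring, abs_div, abs_neg, abs_of_pos hbR,
      div_lt_div_iff₀ hbR (by positivity)] at h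
    exact lt_of_mul_lt_mul_left (by linarith) hbR.le
  have hv : v ≤ u + b * √5 := by
    calc v = |(a - b * φ) + b * √5| := by
          rw [← goldenRatio_sub_goldenConj,
            show (a : ℝ) - b * φ + b * (φ - ψ) = a - b * ψ by ring]
      _ ≤ u + |b * √5| := abs_add_le _ _
      _ = u + b * √5 := by rw [abs_of_nonneg (by positivity : (0 : ℝ) ≤ b * √5)]
  have hbu : 0 ≤ b * u := by positivity
  have hb2 : (b : ℝ) ^ 2 < c * (c + b ^ 2 * √5) := calc
    (b : ℝ) ^ 2 ≤ b ^ 2 * (u * v) :=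
      le_mul_of_one_le_right (by positivity)
        (one_le_abs_sub_mul_goldenRatio_mul_abs_sub_mul_goldenConj hb.ne')
    _ = (b * u) * (b * v) := by ring
    _ ≤ (b * u) * (b * u + b ^ 2 * √5) := by gcongr; nlinarith
    _ < c * (c + b ^ 2 * √5) := mul_lt_mul'' hu (by linarith) hbu (by positivity)
  linarith [hb2]

theorem finite_setOf_abs_sub_div_le_of_den_le (ξ M r : ℝ) :
    {p : ℤ × ℤ | 0 < p.2 ∧ (p.2 : ℝ) ≤ M ∧ |ξ - p.1 / p.2| ≤ r}.Finite := by
  set K := ⌈(|ξ| + r) * M⌉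
  refine (Set.finite_Icc ((-K, 1) : ℤ × ℤ) (K, ⌈M⌉)).subset ?_
  rintro ⟨a, b⟩ ⟨hb, hbM, h⟩
  have hbR : (0 : ℝ) < b := by exact_mod_cast hb
  have ha : |(a : ℝ)| ≤ (|ξ| + r) * M := by
    have : |(a : ℝ) / b| ≤ |ξ| + r := by
      calc |(a : ℝ) / b| = |ξ - (ξ - a / b)| := by ring_nf
        _ ≤ |ξ| + |ξ - a / b| := abs_sub _ _
        _ ≤ |ξ| + r := by linarith
    rw [abs_div, abs_of_pos hbR, div_le_iff₀ hbR] at this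
    nlinarith [abs_nonneg (a : ℝ)]
  have haK : |a| ≤ K := Int.cast_le.1 ((Int.cast_abs (R := ℝ) ▸ ha).trans (Int.le_ceil _))
  have hbN : b ≤ ⌈M⌉ := Int.cast_le.1 (hbM.trans (Int.le_ceil _))
  exact ⟨⟨neg_le_of_abs_le haK, hb⟩, le_of_abs_le haK, hbN⟩

/-- Hurwitz's theorem, part II: for the Golden Ratio `α = (√5 + 1)/2` and any
`0 < c < 1/√5`, the inequality `|α - a/b| < c/b²` has only finitely many
integer solutions `(a, b)` with `b > 0`. -/
theorem hurwitz_part_II (c : ℝ) (hc0 : 0 < c) (hc : c < 1 / Real.sqrt 5) :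
    Set.Finite {p : ℤ × ℤ | 0 < p.2 ∧
      |(Real.sqrt 5 + 1) / 2 - (p.1 : ℝ) / (p.2 : ℝ)| < c / (p.2 : ℝ) ^ 2} := by
  have hc5 : 0 < 1 - c * √5 := by
    rw [lt_one_div hc0 (by positivity)] at hc
    linarith [(lt_div_iff₀ hc0).1 hc]
  refine (finite_setOf_abs_sub_div_le_of_den_le φ (c ^ 2 / (1 - c * √5)) c).subset ?_
  rintro ⟨a, b⟩ ⟨hb, h⟩
  rw [add_comm, ← goldenRatio] at h
  have hb1 : (1 : ℝ) ≤ b := by exact_mod_cast hb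
  refine ⟨hb, ?_, h.le.trans (div_le_self hc0.le (one_le_pow₀ hb1))⟩
  rw [le_div_iff₀ hc5]
  nlinarith [sq_mul_one_sub_mul_sqrt_five_lt_sq_of_abs_goldenRatio_sub_div_lt hb h]
end

section
/- For every real ε > 0, for Lebesgue-almost every real number α there exists a constant c > 0 (depending on α and ε) such that the inequality |α − a/b²| < c/(b³ · (log b)^{1+ε}) has no integer solutions (a, b) with b ≥ 2. Precisely: for every ε > 0, the set of real numbers α for which such a positive constant c exists has full Lebesgue measure in ℝ. -/
/-!
Fix a window `|α| ≤ M` and a constant `c ≤ 1`. Every `α` in the window with a solution of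
`|α - a/b²| < c ψ(b)`, `ψ(b) = 1/(b³ (log b)^{1+ε})`, lies in one of at most `(2T+1) b²` intervals
of length `2cψ(b)` for each `b`, where `T` depends only on `M`. These cover a set of measure
`O(c ∑ b² ψ(b)) = O(c ∑ 1/(b (log b)^{1+ε}))`, and this Bertrand series converges by Cauchy
condensation. Letting `c → 0` shows that the `α` admitting solutions for every `c` form a null set.
-/

open MeasureTheory Filter Topology Set
open scoped ENNReal

theorem summable_one_div_nat_mul_log_rpow {p : ℝ} (hp : 1 < p) :
    Summable fun n : ℕ => 1 / (n * Real.log n ^ p) := by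
  have hlog2 : 0 < Real.log 2 := Real.log_pos one_lt_two
  refine (summable_condensed_iff_of_eventually_nonneg
    (Eventually.of_forall fun n => by positivity) ?_).mp ?_
  · filter_upwards [eventually_ge_atTop 2] with n hn
    have hlog : 0 < Real.log n := Real.log_pos (by exact_mod_cast hn)
    gcongr <;> simp
  · refine ((Real.summable_one_div_nat_rpow.mpr hp).mul_left (Real.log 2 ^ p)⁻¹).congr fun k => ?_
    push_cast
    rw [Real.log_pow, Real.mul_rpow (Nat.cast_nonneg k) hlog2.le]
    field_simp

theorem abs_lt_mul_of_abs_sub_div_lt {α r M T : ℝ} {a : ℤ} {q : ℕ} (hq : 0 < q) (hα : |α| ≤ M)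
    (ha : |α - a / q| < r) (hT : M + r ≤ T) : |(a : ℝ)| < T * q := by
  have hq' : (0 : ℝ) < q := by exact_mod_cast hq
  rw [← div_lt_iff₀ hq', ← abs_of_pos hq', ← abs_div]
  linarith [abs_sub_abs_le_abs_sub ((a : ℝ) / q) α, abs_sub_comm ((a : ℝ) / q) α]

section

variable {ι : Type*} {q : ι → ℕ}

def fractionBalls (q : ι → ℕ) (T : ℕ) (r : ι → ℝ) : Set ℝ :=
  ⋃ i, ⋃ a ∈ Finset.Icc (-((T * q i : ℕ) : ℤ)) (T * q i : ℕ), Metric.ball ((a : ℝ) / q i) (r i)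

theorem volume_fractionBalls_le [Countable ι] (hq : ∀ i, 0 < q i) (T : ℕ) {r : ι → ℝ}
    (hr : ∀ i, 0 ≤ r i) :
    volume (fractionBalls q T r) ≤ ∑' i, ENNReal.ofReal ((2 * T + 1) * q i * (2 * r i)) := by
  refine (measure_iUnion_le _).trans (ENNReal.tsum_le_tsum fun i => ?_)
  have hcard : (Finset.Icc (-((T * q i : ℕ) : ℤ)) (T * q i : ℕ)).card = 2 * (T * q i) + 1 := by
    rw [Int.card_Icc]; omega
  calc _ ≤ ∑ a ∈ Finset.Icc (-((T * q i : ℕ) : ℤ)) (T * q i : ℕ),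
        volume (Metric.ball ((a : ℝ) / q i) (r i)) := measure_biUnion_finset_le _ _
    _ = ENNReal.ofReal ((2 * (T * q i) + 1 : ℕ) * (2 * r i)) := by
      simp only [Real.volume_ball, Finset.sum_const, hcard, nsmul_eq_mul]
      rw [ENNReal.ofReal_mul (Nat.cast_nonneg (2 * (T * q i) + 1)), ENNReal.ofReal_natCast]
    _ ≤ ENNReal.ofReal ((2 * T + 1) * q i * (2 * r i)) := by
      have : (1 : ℝ) ≤ q i := by exact_mod_cast hq i
      gcongr ENNReal.ofReal (?_ * _)
      · linarith [hr i]
      · push_cast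
        nlinarith

theorem mem_fractionBalls_of_abs_sub_div_lt (hq : ∀ i, 0 < q i) {T : ℕ} {r : ι → ℝ} {α M : ℝ}
    (hα : |α| ≤ M) {i : ι} {a : ℤ} (ha : |α - a / q i| < r i) (hT : M + r i ≤ T) :
    α ∈ fractionBalls q T r := by
  have hlt : |(a : ℝ)| < ((T * q i : ℕ) : ℤ) := by
    push_cast
    exact abs_lt_mul_of_abs_sub_div_lt (hq i) hα ha hT
  simp only [fractionBalls, mem_iUnion, Metric.mem_ball, Real.dist_eq]
  refine ⟨i, a, ?_, ha⟩
  rw [Finset.mem_Icc, ← abs_le]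
  exact_mod_cast hlt.le

theorem ae_exists_pos_forall_not_abs_sub_div_lt [Countable ι] {ψ : ι → ℝ} (hq : ∀ i, 0 < q i)
    (hψ : ∀ i, 0 ≤ ψ i) (hsum : Summable fun i => (q i : ℝ) * ψ i) :
    ∀ᵐ α : ℝ, ∃ c : ℝ, 0 < c ∧ ∀ i (a : ℤ), ¬ |α - a / q i| < c * ψ i := by
  set S := ∑' i, (q i : ℝ) * ψ i
  have hψS : ∀ i, ψ i ≤ S := fun i =>
    (le_mul_of_one_le_left (hψ i) (by exact_mod_cast hq i)).trans
      (hsum.le_tsum i fun j _ => mul_nonneg (Nat.cast_nonneg _) (hψ j))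
  rw [ae_iff]
  set Bad := {α : ℝ | ¬∃ c : ℝ, 0 < c ∧ ∀ i (a : ℤ), ¬ |α - a / q i| < c * ψ i}
  refine measure_null_of_locally_null Bad fun x _ => ⟨Bad ∩ Icc (-(|x| + 1)) (|x| + 1),
    inter_mem_nhdsWithin _ <|
      Icc_mem_nhds (by linarith [neg_abs_le x]) (by linarith [le_abs_self x]), ?_⟩
  set M := |x| + 1
  obtain ⟨T, hT⟩ := exists_nat_ge (M + S)
  have hsub : ∀ c ∈ Ioc (0 : ℝ) 1, Bad ∩ Icc (-M) M ⊆ fractionBalls q T fun i => c * ψ i := by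
    rintro c ⟨hc, hc1⟩ α ⟨hαbad, hαM⟩
    have hsol : ∀ c, 0 < c → ∃ i, ∃ a : ℤ, |α - a / q i| < c * ψ i := by
      simpa [Bad] using hαbad
    obtain ⟨i, a, ha⟩ := hsol c hc
    refine mem_fractionBalls_of_abs_sub_div_lt hq (abs_le.mpr hαM) ha ?_
    nlinarith [hψS i, hψ i]
  have hvol : ∀ c, 0 ≤ c → volume (fractionBalls q T fun i => c * ψ i) ≤
      ENNReal.ofReal (2 * (2 * T + 1) * c * S) := by
    intro c hc
    have hterm : ∀ i, (2 * T + 1) * q i * (2 * (c * ψ i)) = 2 * (2 * T + 1) * c * (q i * ψ i) :=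
      fun i => by ring
    refine (volume_fractionBalls_le hq T fun i => mul_nonneg hc (hψ i)).trans_eq ?_
    simp_rw [hterm]
    have hnonneg : ∀ i, 0 ≤ 2 * (2 * T + 1) * c * (q i * ψ i) := fun i =>
      mul_nonneg (by positivity) (mul_nonneg (Nat.cast_nonneg _) (hψ i))
    rw [← ENNReal.ofReal_tsum_of_nonneg hnonneg (hsum.mul_left _), tsum_mul_left]
  have hlim : Tendsto (fun c : ℝ => ENNReal.ofReal (2 * (2 * T + 1) * c * S)) (𝓝[>] 0) (𝓝 0) := by
    have : Continuous fun c : ℝ => ENNReal.ofReal (2 * (2 * T + 1) * c * S) :=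
      ENNReal.continuous_ofReal.comp (by fun_prop)
    simpa using (this.tendsto 0).mono_left nhdsWithin_le_nhds
  refine le_antisymm (ge_of_tendsto hlim ?_) bot_le
  filter_upwards [Ioc_mem_nhdsGT one_pos] with c hc
  exact (measure_mono (hsub c hc)).trans (hvol c hc.1.le)

end

/-- Borosh–Fraenkel lower bound: for every `ε > 0`, for Lebesgue-almost every
real `α` there is a constant `c > 0` such that
`|α - a/b²| < c / (b³ (log b)^{1+ε})` has no integer solutions with `b ≥ 2`. -/
theorem borosh_fraenkel (ε : ℝ) (hε : 0 < ε) :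
    ∀ᵐ α ∂(volume : Measure ℝ), ∃ c : ℝ, 0 < c ∧
      ∀ a b : ℤ, 2 ≤ b →
        ¬ |α - (a : ℝ) / (b : ℝ) ^ 2| <
            c / ((b : ℝ) ^ 3 * Real.log (b : ℝ) ^ (1 + ε : ℝ)) := by
  set ψ : ℕ → ℝ := fun b => 1 / ((b : ℝ) ^ 3 * Real.log b ^ (1 + ε))
  have hsum : Summable fun b : {b : ℕ // 2 ≤ b} => ((b.1 ^ 2 : ℕ) : ℝ) * ψ b := by
    refine ((summable_one_div_nat_mul_log_rpow (p := 1 + ε) (by linarith)).subtype _).congr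
      fun b => ?_
    have hb0 : (b.1 : ℝ) ≠ 0 := by have := b.2; positivity
    simp only [ψ, Function.comp_apply]
    push_cast
    field_simp
  filter_upwards [ae_exists_pos_forall_not_abs_sub_div_lt (fun b => by have := b.2; positivity)
    (fun b => by positivity) hsum] with α ⟨c, hc, hα⟩
  refine ⟨c, hc, fun a b hb => ?_⟩
  lift b to ℕ using by omega
  simpa [ψ, div_eq_mul_one_div c] using hα ⟨b, by omega⟩ a
end
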